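/- arXiv:2108.00534 — 2 statements merged into one kernel-verified Lean document; each statement's English description precedes it below -/
import Mathlib

section
/- For all λ ∈ [0,1]: ∫_0^1 E( 4λr / (λ+r)² ) · (λ+r) · r / √(1−r²) dr = (π²/8) ( λ²/2 + 1 ). -/
/-! The half-angle substitution gives `(λ + r) E(4λr/(λ+r)²) = ¼ ∫_{-π}^{π} |λ + r e^{iφ}| dφ`.
Writing a Euclidean norm as an average of projections, `|w| = ¼ ∫_{-π}^{π} |Re(w e^{-iβ})| dβ`,
and shifting `φ`, the integrand becomes `1/16 ∫_β ∫_φ |λ cos β + r cos φ|`. After exchanging the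
`r`- and `β`-integrals, each inner integral is, in polar coordinates `(x, y) = r e^{iφ}`, the
integral of `|λ cos β + x| / √(1 - x² - y²)` over the unit disc; integrating out `y` first leaves
`π ∫_{-1}^{1} |λ cos β + x| dx = π (λ² cos² β + 1)`, and the `β`-integral gives the result. -/

open MeasureTheory Real

/-- The complete elliptic integral of the second kind,
`E(z) = ∫₀^{π/2} √(1 - z sin²θ) dθ`. -/
noncomputable def ellipticE (z : ℝ) : ℝ :=
  ∫ θ in Set.Ioo (0 : ℝ) (Real.pi / 2), Real.sqrt (1 - z * Real.sin θ ^ 2)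

open Set Function

theorem Function.Periodic.intervalIntegral_comp_sub_eq {g : ℝ → ℝ} {T : ℝ} (hg : Periodic g T)
    (t c : ℝ) : ∫ x in t..t + T, g (x - c) = ∫ x in t..t + T, g x := by
  rw [intervalIntegral.integral_comp_sub_right, add_sub_right_comm, hg.intervalIntegral_add_eq]

theorem integral_abs_cos : ∫ x in -π..π, |cos x| = 4 := by
  have hper : Periodic (fun x => |cos x|) π := fun x => by simp [cos_add_pi]
  have hint : ∀ a b, IntervalIntegrable (fun x => |cos x|) volume a b :=
    fun a b => continuous_cos.abs.intervalIntegrable a b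
  have h_two_periods := hper.intervalIntegral_add_zsmul_eq 2 (-π) hint
  have h_shift := hper.intervalIntegral_add_eq (-π) (-(π / 2))
  have h_cos : ∫ x in -(π / 2)..-(π / 2) + π, |cos x| = ∫ x in -(π / 2)..π / 2, cos x := by
    rw [show -(π / 2) + π = π / 2 by ring]
    refine intervalIntegral.integral_congr fun x hx => abs_of_nonneg (cos_nonneg_of_mem_Icc ?_)
    rwa [uIcc_of_le (by linarith [pi_pos])] at hx
  rw [show -π + (2 : ℤ) • π = π by simp; ring] at h_two_periods
  rw [h_two_periods, h_shift, h_cos, integral_cos]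
  norm_num

theorem sqrt_sq_add_sq_eq_integral_abs (a b : ℝ) :
    √(a ^ 2 + b ^ 2) = 1 / 4 * ∫ β in -π..π, |a * cos β + b * sin β| := by
  set z : ℂ := ⟨a, b⟩
  have h_rot : ∀ β, |a * cos β + b * sin β| = ‖z‖ * |cos (β - z.arg)| := fun β => by
    rw [cos_sub, ← abs_of_nonneg (norm_nonneg z), ← abs_mul]
    congr 1
    have ha : ‖z‖ * cos z.arg = a := Complex.norm_mul_cos_arg z
    have hb : ‖z‖ * sin z.arg = b := Complex.norm_mul_sin_arg z
    rw [← ha, ← hb]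
    ring
  have hper : Periodic (fun x => |cos x|) (2 * π) := fun x => by simp [cos_add_two_pi]
  have h_shift := hper.intervalIntegral_comp_sub_eq (-π) z.arg
  rw [show -π + 2 * π = π by ring] at h_shift
  simp_rw [h_rot, intervalIntegral.integral_const_mul]
  rw [h_shift, integral_abs_cos, Complex.norm_def, Complex.normSq_mk]
  ring_nf

theorem integral_mul_integral_swap_of_bounded {α β : Type*} [MeasurableSpace α]
    [MeasurableSpace β] {μ : Measure α} {ν : Measure β} [SFinite μ] [IsFiniteMeasure ν]
    {w : α → ℝ} {F : α → β → ℝ} (hw : Integrable w μ)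
    (hF : AEStronglyMeasurable (uncurry F) (μ.prod ν)) {C : ℝ}
    (hC : ∀ᵐ x ∂μ, ∀ y, ‖F x y‖ ≤ C) :
    ∫ x, w x * ∫ y, F x y ∂ν ∂μ = ∫ y, ∫ x, w x * F x y ∂μ ∂ν := by
  simp_rw [← integral_const_mul]
  refine integral_integral_swap ((hw.norm.mul_prod (integrable_const C)).mono' ?_ ?_)
  · exact hw.aestronglyMeasurable.comp_fst.mul hF
  · filter_upwards [Measure.quasiMeasurePreserving_fst.ae hC] with p hp
    rw [uncurry_apply_pair, norm_mul]
    exact mul_le_mul_of_nonneg_left (hp p.2) (norm_nonneg _)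

theorem ellipticE_eq_intervalIntegral (z : ℝ) :
    ellipticE z = ∫ θ in 0..π / 2, √(1 - z * sin θ ^ 2) := by
  rw [ellipticE, intervalIntegral.integral_of_le (by positivity), integral_Ioc_eq_integral_Ioo]

theorem mul_ellipticE {l r : ℝ} (hlr : 0 < l + r) :
    (l + r) * ellipticE (4 * l * r / (l + r) ^ 2)
      = 1 / 4 * ∫ φ in -π..π, √(l ^ 2 + r ^ 2 + 2 * l * r * cos φ) := by
  set G : ℝ → ℝ := fun φ => √(l ^ 2 + r ^ 2 + 2 * l * r * cos φ)
  have h_half_angle : ∀ θ, (l + r) * √(1 - 4 * l * r / (l + r) ^ 2 * sin θ ^ 2) = G (2 * θ) :=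
    fun θ => by
    have h : l ^ 2 + r ^ 2 + 2 * l * r * cos (2 * θ)
        = (l + r) ^ 2 * (1 - 4 * l * r / (l + r) ^ 2 * sin θ ^ 2) := by
      rw [cos_two_mul, cos_sq']
      field_simp
      ring
    rw [show G (2 * θ) = _ from congrArg sqrt h, sqrt_mul (sq_nonneg _), sqrt_sq hlr.le]
  have h_even : ∫ φ in -π..0, G φ = ∫ φ in 0..π, G φ := by
    simpa [G] using (intervalIntegral.integral_comp_neg (a := 0) (b := π) G).symm
  have hG : ∀ a b, IntervalIntegrable G volume a b :=
    Continuous.intervalIntegrable (by fun_prop)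
  rw [ellipticE_eq_intervalIntegral, ← intervalIntegral.integral_const_mul]
  simp_rw [h_half_angle]
  rw [intervalIntegral.integral_comp_mul_left G two_ne_zero,
    ← intervalIntegral.integral_add_adjacent_intervals (hG (-π) 0) (hG 0 π), h_even]
  simp only [mul_zero, show 2 * (π / 2) = π by ring, smul_eq_mul]
  ring

theorem abs_mul_cos_add_mul_cos_le (l r x y : ℝ) : |l * cos x + r * cos y| ≤ |l| + |r| := by
  refine (abs_add_le _ _).trans (add_le_add ?_ ?_) <;>
    rw [abs_mul] <;> exact mul_le_of_le_one_right (abs_nonneg _) (abs_cos_le_one _)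

theorem integral_sqrt_add_mul_cos_eq_integral_integral_abs (l r : ℝ) :
    ∫ φ in -π..π, √(l ^ 2 + r ^ 2 + 2 * l * r * cos φ)
      = 1 / 4 * ∫ β in -π..π, ∫ φ in -π..π, |l * cos β + r * cos φ| := by
  have hπ : -π ≤ π := by linarith [pi_pos]
  have h_cauchy : ∀ φ, √(l ^ 2 + r ^ 2 + 2 * l * r * cos φ)
      = 1 / 4 * ∫ β in -π..π, |l * cos β + r * cos (φ - β)| := fun φ => by
    have h : l ^ 2 + r ^ 2 + 2 * l * r * cos φ = (l + r * cos φ) ^ 2 + (r * sin φ) ^ 2 := by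
      linear_combination (-r ^ 2) * sin_sq_add_cos_sq φ
    simp_rw [h, sqrt_sq_add_sq_eq_integral_abs, cos_sub]
    ring_nf
  have h_swap : ∫ φ in -π..π, ∫ β in -π..π, |l * cos β + r * cos (φ - β)|
      = ∫ β in -π..π, ∫ φ in -π..π, |l * cos β + r * cos (φ - β)| := by
    have := isFiniteMeasure_restrict.2 (measure_Ioc_lt_top (μ := volume) (a := -π) (b := π)).ne
    simp only [intervalIntegral.integral_of_le hπ]
    simpa using integral_mul_integral_swap_of_bounded (integrable_const (1 : ℝ))
      (F := fun φ β => |l * cos β + r * cos (φ - β)|) (by fun_prop)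
      (ae_of_all _ fun φ β => by simpa using abs_mul_cos_add_mul_cos_le l r β (φ - β))
  have h_shift : ∀ β, ∫ φ in -π..π, |l * cos β + r * cos (φ - β)|
      = ∫ φ in -π..π, |l * cos β + r * cos φ| := fun β => by
    have hper : Periodic (fun x => |l * cos β + r * cos x|) (2 * π) := fun x => by
      simp [cos_add_two_pi]
    simpa [show -π + 2 * π = π by ring] using hper.intervalIntegral_comp_sub_eq (-π) β
  simp_rw [h_cauchy, intervalIntegral.integral_const_mul, h_swap, h_shift]

theorem hasDerivAt_arcsin_of_mem_Ioo {x : ℝ} (hx : x ∈ Ioo (-1 : ℝ) 1) :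
    HasDerivAt arcsin (√(1 - x ^ 2))⁻¹ x := by
  simpa using hasDerivAt_arcsin (by linarith [hx.1] : x ≠ -1) (by linarith [hx.2] : x ≠ 1)

theorem integrableOn_inv_sqrt_one_sub_sq :
    IntegrableOn (fun t : ℝ => (√(1 - t ^ 2))⁻¹) (Ioc (-1) 1) :=
  intervalIntegral.integrableOn_deriv_of_nonneg continuous_arcsin.continuousOn
    (fun _ hx => hasDerivAt_arcsin_of_mem_Ioo hx) (fun _ _ => by positivity)

-- `√` of a negative number is `0` and `0⁻¹ = 0`, so these integrands vanish off `y ^ 2 < b`.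
theorem inv_sqrt_sub_sq_eq_zero {b y : ℝ} (h : b ≤ y ^ 2) : (√(b - y ^ 2))⁻¹ = 0 := by
  rw [sqrt_eq_zero_of_nonpos (by linarith), inv_zero]

theorem inv_sqrt_one_sub_sq_eq_zero_of_notMem {t : ℝ} (ht : t ∉ Ioc (-1 : ℝ) 1) :
    (√(1 - t ^ 2))⁻¹ = 0 := by
  refine inv_sqrt_sub_sq_eq_zero ?_
  simp only [mem_Ioc, not_and_or, not_lt, not_le] at ht
  rcases ht with h | h <;> nlinarith

theorem integrable_inv_sqrt_one_sub_sq : Integrable fun t : ℝ => (√(1 - t ^ 2))⁻¹ :=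
  integrableOn_inv_sqrt_one_sub_sq.integrable_of_forall_notMem_eq_zero
    fun _ => inv_sqrt_one_sub_sq_eq_zero_of_notMem

theorem integral_inv_sqrt_one_sub_sq : ∫ t, (√(1 - t ^ 2))⁻¹ = π := by
  rw [← setIntegral_eq_integral_of_forall_compl_eq_zero
    fun _ => inv_sqrt_one_sub_sq_eq_zero_of_notMem, ← intervalIntegral.integral_of_le (by norm_num),
    intervalIntegral.integral_eq_sub_of_hasDerivAt_of_le (by norm_num) continuous_arcsin.continuousOn
      (fun _ hx => hasDerivAt_arcsin_of_mem_Ioo hx)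
      ((intervalIntegrable_iff_integrableOn_Ioc_of_le (by norm_num)).2
        integrableOn_inv_sqrt_one_sub_sq),
    arcsin_one, arcsin_neg_one]
  ring

theorem inv_sqrt_sub_sq_comp_mul {b : ℝ} (hb : 0 < b) (t : ℝ) :
    (√(b - (√b * t) ^ 2))⁻¹ = (√b)⁻¹ * (√(1 - t ^ 2))⁻¹ := by
  rw [mul_pow, sq_sqrt hb.le, ← mul_one_sub, sqrt_mul hb.le, mul_inv]

theorem integrable_inv_sqrt_sub_sq (b : ℝ) : Integrable fun y : ℝ => (√(b - y ^ 2))⁻¹ := by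
  rcases le_or_gt b 0 with hb | hb
  · simp only [inv_sqrt_sub_sq_eq_zero (hb.trans (sq_nonneg _))]
    exact integrable_zero ℝ ℝ volume
  · refine (integrable_comp_mul_left_iff _ (sqrt_pos.2 hb).ne').1 ?_
    simpa only [inv_sqrt_sub_sq_comp_mul hb] using integrable_inv_sqrt_one_sub_sq.const_mul _

theorem integral_inv_sqrt_sub_sq (b : ℝ) :
    ∫ y, (√(b - y ^ 2))⁻¹ = if 0 < b then π else 0 := by
  split_ifs with hb
  · have h := Measure.integral_comp_mul_left (fun y => (√(b - y ^ 2))⁻¹) √b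
    simp only [inv_sqrt_sub_sq_comp_mul hb, integral_const_mul, integral_inv_sqrt_one_sub_sq,
      smul_eq_mul, abs_of_pos (inv_pos.2 (sqrt_pos.2 hb))] at h
    exact (mul_left_cancel₀ (inv_ne_zero (sqrt_pos.2 hb).ne') h).symm
  · simp only [inv_sqrt_sub_sq_eq_zero ((not_lt.1 hb).trans (sq_nonneg _)), integral_zero]

theorem integral_mul_inv_sqrt_one_sub_sq_sub_sq (g : ℝ → ℝ) (x : ℝ) :
    ∫ y, g x * (√(1 - x ^ 2 - y ^ 2))⁻¹ = (Ioo (-1) 1).indicator (fun x => π * g x) x := by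
  have hx : 0 < 1 - x ^ 2 ↔ x ∈ Ioo (-1) 1 := by
    rw [sub_pos, sq_lt_one_iff_abs_lt_one, abs_lt, mem_Ioo]
  rw [integral_const_mul, integral_inv_sqrt_sub_sq]
  by_cases h : x ∈ Ioo (-1) 1
  · rw [if_pos (hx.2 h), indicator_of_mem h, mul_comm]
  · rw [if_neg (mt hx.1 h), indicator_of_notMem h, mul_zero]

theorem integrable_mul_inv_sqrt_one_sub_sq_sub_sq {h : ℝ → ℝ} (hh : Continuous h) :
    Integrable fun p : ℝ × ℝ => h p.1 * (√(1 - p.1 ^ 2 - p.2 ^ 2))⁻¹ := by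
  refine (integrable_prod_iff (by fun_prop)).2 ⟨ae_of_all _ fun x =>
    (integrable_inv_sqrt_sub_sq (1 - x ^ 2)).const_mul (h x), ?_⟩
  simp only [norm_mul, norm_inv, norm_of_nonneg (sqrt_nonneg _),
    integral_mul_inv_sqrt_one_sub_sq_sub_sq (‖h ·‖)]
  exact IntegrableOn.integrable_indicator
    ((hh.norm.integrableOn_Icc.mono_set Ioo_subset_Icc_self).const_mul π) measurableSet_Ioo

theorem integral_mul_inv_sqrt_one_sub_sq_sub_sq_prod {h : ℝ → ℝ} (hh : Continuous h) :
    ∫ p : ℝ × ℝ, h p.1 * (√(1 - p.1 ^ 2 - p.2 ^ 2))⁻¹ = π * ∫ x in -1..1, h x := by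
  rw [Measure.volume_eq_prod, integral_prod _ (integrable_mul_inv_sqrt_one_sub_sq_sub_sq hh)]
  simp only [integral_mul_inv_sqrt_one_sub_sq_sub_sq h]
  rw [integral_indicator measurableSet_Ioo, integral_const_mul, ← integral_Ioc_eq_integral_Ioo,
    ← intervalIntegral.integral_of_le (by norm_num)]

theorem integrableOn_polarCoord_target_of_integrable {f : ℝ × ℝ → ℝ} (hf : Integrable f) :
    IntegrableOn (fun p => p.1 * f (polarCoord.symm p)) polarCoord.target := by
  have h := hf.integrableOn (s := polarCoord.symm '' polarCoord.target)
  rw [integrableOn_image_iff_integrableOn_abs_det_fderiv_smul volume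
    polarCoord.open_target.measurableSet
    (fun p _ => (hasFDerivAt_polarCoord_symm p).hasFDerivWithinAt) polarCoord.symm.injOn] at h
  refine h.congr_fun (fun p hp => ?_) polarCoord.open_target.measurableSet
  dsimp only
  rw [det_fderivPolarCoordSymm, abs_of_pos hp.1, smul_eq_mul]

theorem integral_div_sqrt_one_sub_sq_mul_integral_comp_mul_cos {h : ℝ → ℝ} (hh : Continuous h) :
    ∫ r in Ioo 0 1, r / √(1 - r ^ 2) * ∫ φ in -π..π, h (r * cos φ) = π * ∫ x in -1..1, h x := by
  set f : ℝ × ℝ → ℝ := fun p => h p.1 * (√(1 - p.1 ^ 2 - p.2 ^ 2))⁻¹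
  set g : ℝ × ℝ → ℝ := fun p => p.1 * f (polarCoord.symm p)
  have hg : ∀ r φ, g (r, φ) = r / √(1 - r ^ 2) * h (r * cos φ) := fun r φ => by
    have h_pyth : 1 - (r * cos φ) ^ 2 - (r * sin φ) ^ 2 = 1 - r ^ 2 := by
      linear_combination (-r ^ 2) * sin_sq_add_cos_sq φ
    simp only [g, f, polarCoord_symm_apply, h_pyth]
    ring
  have hg_outside : ∀ r ∈ Ioi 0 \ Ioo 0 1, ∫ φ in Ioo (-π) π, g (r, φ) = 0 := fun r hr => by
    have hr1 : 1 - r ^ 2 ≤ 0 := by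
      have : 1 ≤ r := not_lt.1 fun hr1 => hr.2 ⟨hr.1, hr1⟩
      nlinarith
    simp [hg, sqrt_eq_zero_of_nonpos hr1]
  calc ∫ r in Ioo 0 1, r / √(1 - r ^ 2) * ∫ φ in -π..π, h (r * cos φ)
      = ∫ r in Ioo 0 1, ∫ φ in Ioo (-π) π, g (r, φ) := by
        refine setIntegral_congr_fun measurableSet_Ioo fun r _ => ?_
        simp only [hg, integral_const_mul]
        rw [intervalIntegral.integral_of_le (by linarith [pi_pos]), integral_Ioc_eq_integral_Ioo]
    _ = ∫ r in Ioi 0, ∫ φ in Ioo (-π) π, g (r, φ) :=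
        (setIntegral_eq_of_subset_of_forall_sdiff_eq_zero measurableSet_Ioi Ioo_subset_Ioi_self
          hg_outside).symm
    _ = ∫ p in polarCoord.target, g p := by
        rw [Measure.volume_eq_prod, polarCoord_target]
        exact (setIntegral_prod g (integrableOn_polarCoord_target_of_integrable
          (integrable_mul_inv_sqrt_one_sub_sq_sub_sq hh))).symm
    _ = ∫ p, f p := integral_comp_polarCoord_symm f
    _ = π * ∫ x in -1..1, h x := integral_mul_inv_sqrt_one_sub_sq_sub_sq_prod hh

theorem integral_abs_add {c : ℝ} (hc : |c| ≤ 1) : ∫ x in -1..1, |c + x| = c ^ 2 + 1 := by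
  obtain ⟨hc₁, hc₂⟩ := abs_le.1 hc
  have hint : ∀ a b : ℝ, IntervalIntegrable (fun x => |c + x|) volume a b :=
    fun a b => (continuous_const.add continuous_id).abs.intervalIntegrable a b
  have h_lin : ∀ a b : ℝ, ∫ x in a..b, (c + x) = c * (b - a) + (b ^ 2 - a ^ 2) / 2 := fun a b => by
    rw [intervalIntegral.integral_add intervalIntegrable_const intervalIntegral.intervalIntegrable_id,
      integral_id, intervalIntegral.integral_const, smul_eq_mul]
    ring
  have h_neg : ∫ x in -1..-c, |c + x| = ∫ x in -1..-c, -(c + x) := by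
    refine intervalIntegral.integral_congr fun x hx => abs_of_nonpos ?_
    rw [uIcc_of_le (by linarith)] at hx
    linarith [hx.2]
  have h_pos : ∫ x in -c..1, |c + x| = ∫ x in -c..1, (c + x) := by
    refine intervalIntegral.integral_congr fun x hx => abs_of_nonneg ?_
    rw [uIcc_of_le (by linarith)] at hx
    linarith [hx.1]
  rw [← intervalIntegral.integral_add_adjacent_intervals (hint (-1) (-c)) (hint (-c) 1), h_neg,
    h_pos, intervalIntegral.integral_neg, h_lin, h_lin]
  ring

theorem integrableOn_div_sqrt_one_sub_sq :
    IntegrableOn (fun r : ℝ => r / √(1 - r ^ 2)) (Ioc 0 1) := by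
  refine intervalIntegral.integrableOn_deriv_of_nonneg (g := fun r => -√(1 - r ^ 2))
    (by fun_prop) (fun x hx => ?_) (fun x hx => div_nonneg hx.1.le (sqrt_nonneg _))
  have h_pos : 0 < 1 - x ^ 2 := by nlinarith [hx.1, hx.2]
  refine (((hasDerivAt_pow 2 x).const_sub 1).sqrt h_pos.ne').neg.congr_deriv ?_
  field_simp
  norm_num

theorem integral_div_sqrt_one_sub_sq_mul_integral_abs_add_mul_cos {c : ℝ} (hc : |c| ≤ 1) :
    ∫ r in Ioo 0 1, r / √(1 - r ^ 2) * ∫ φ in -π..π, |c + r * cos φ| = π * (c ^ 2 + 1) := by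
  rw [integral_div_sqrt_one_sub_sq_mul_integral_comp_mul_cos (h := fun x => |c + x|) (by fun_prop),
    integral_abs_add hc]

theorem integral_sq_mul_cos_sq_add_one (l : ℝ) :
    ∫ β in -π..π, ((l * cos β) ^ 2 + 1) = π * (l ^ 2 + 2) := by
  simp_rw [mul_pow]
  rw [intervalIntegral.integral_add (f := fun x => l ^ 2 * cos x ^ 2)
    (Continuous.intervalIntegrable (by fun_prop) _ _) intervalIntegrable_const,
    intervalIntegral.integral_const_mul, integral_cos_sq, intervalIntegral.integral_const]
  simp only [cos_pi, sin_pi, mul_zero, cos_neg, sin_neg, neg_zero, sub_self, zero_add,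
    sub_neg_eq_add, add_self_div_two, smul_eq_mul, mul_one]
  ring

theorem integral_div_sqrt_one_sub_sq_mul_integral_integral_abs {l : ℝ} (hl : |l| ≤ 1) :
    ∫ r in Ioo 0 1, r / √(1 - r ^ 2) * ∫ β in -π..π, ∫ φ in -π..π, |l * cos β + r * cos φ|
      = π ^ 2 * (l ^ 2 + 2) := by
  have hπ : -π ≤ π := by linarith [pi_pos]
  set F : ℝ → ℝ → ℝ := fun r β => ∫ φ in -π..π, |l * cos β + r * cos φ|
  have h_swap : ∫ r in Ioo 0 1, r / √(1 - r ^ 2) * ∫ β in -π..π, F r β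
      = ∫ β in -π..π, ∫ r in Ioo 0 1, r / √(1 - r ^ 2) * F r β := by
    have := isFiniteMeasure_restrict.2 (measure_Ioc_lt_top (μ := volume) (a := -π) (b := π)).ne
    simp only [intervalIntegral.integral_of_le hπ]
    refine integral_mul_integral_swap_of_bounded
      (integrableOn_div_sqrt_one_sub_sq.mono_set Ioo_subset_Ioc_self)
      (intervalIntegral.continuous_parametric_intervalIntegral_of_continuous' (by fun_prop) _ _
        |>.aestronglyMeasurable) (C := (|l| + 1) * |π - -π|)
      (ae_restrict_of_forall_mem measurableSet_Ioo fun r hr β => ?_)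
    refine intervalIntegral.norm_integral_le_of_norm_le_const fun φ _ => ?_
    rw [norm_eq_abs, abs_abs]
    refine (abs_mul_cos_add_mul_cos_le l r β φ).trans ?_
    rw [abs_of_pos hr.1]
    linarith [hr.2]
  have h_inner : ∀ β, ∫ r in Ioo 0 1, r / √(1 - r ^ 2) * F r β = π * ((l * cos β) ^ 2 + 1) :=
    fun β => integral_div_sqrt_one_sub_sq_mul_integral_abs_add_mul_cos <| by
      rw [abs_mul]
      exact mul_le_one₀ hl (abs_nonneg _) (abs_cos_le_one β)
  rw [h_swap]
  simp_rw [h_inner, intervalIntegral.integral_const_mul, integral_sq_mul_cos_sq_add_one]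
  ring

/-- **Elliptic integral formula.** For all `λ ∈ [0,1]`,
`∫₀¹ E(4λr/(λ+r)²) (λ+r) r/√(1-r²) dr = (π²/8)(λ²/2 + 1)`. -/
theorem ellipticE_integral_formula
    (l : ℝ) (hl : l ∈ Set.Icc (0 : ℝ) 1) :
    ∫ r in Set.Ioo (0 : ℝ) 1,
        ellipticE (4 * l * r / (l + r) ^ 2) * (l + r) * r / Real.sqrt (1 - r ^ 2)
      = Real.pi ^ 2 / 8 * (l ^ 2 / 2 + 1) := by
  obtain ⟨hl₀, hl₁⟩ := hl
  have h_integrand : ∀ r ∈ Ioo (0 : ℝ) 1,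
      ellipticE (4 * l * r / (l + r) ^ 2) * (l + r) * r / √(1 - r ^ 2)
        = 1 / 16 * (r / √(1 - r ^ 2) *
          ∫ β in -π..π, ∫ φ in -π..π, |l * cos β + r * cos φ|) := fun r hr => by
    rw [mul_comm _ (l + r), mul_ellipticE (by linarith [hr.1]),
      integral_sqrt_add_mul_cos_eq_integral_integral_abs]
    ring
  rw [setIntegral_congr_fun measurableSet_Ioo h_integrand, integral_const_mul,
    integral_div_sqrt_one_sub_sq_mul_integral_integral_abs (abs_le.2 ⟨by linarith, hl₁⟩)]
  ring
end

section
/- For every integer d ≥ 2 and every real ρ > 1: ∫_0^π sin^{d−2}(θ) · (ρ² − 2ρ cos(θ) + 1)^{−d/2} dθ = ( ρ^{2−d} / (ρ²−1) ) · √π · Γ((d−1)/2) / Γ(d/2). -/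
/-!
Write `L(θ) = ρ² - 2ρ cos θ + 1 = |ρ - e^{iθ}|²` (`distSq`) and
`X(n, e) = ∫₀^π sinⁿθ · L(θ)^e dθ` (`trigIntegral`).
Differentiating `sinⁿ⁺¹θ · L^e` and `sinⁿ⁺¹θ cos θ · L^e`, which vanish at `0` and `π`, and using
`2ρ cos θ = ρ² + 1 - L` gives two linear relations among the `X(n, e)`. They carry the pair
`X(n, -n/2 - 1)`, `X(n, -n/2)` from `n` to `n + 2` with the Wallis factor `(n + 1)/(n + 2)`, so that
`ρⁿ (ρ² - 1) X(n, -n/2 - 1) = ρⁿ X(n, -n/2) = ∫₀^π sinⁿ` for all `n`, and `∫₀^π sinⁿ` is a ratio of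
Gamma values. The base cases are explicit: for `n = 1` the integrand is an exact derivative, and for
`n = 0` the Poisson kernel `(ρ² - 1)/L` is the derivative of `θ + 2 arctan (sin θ / (ρ - cos θ))`,
which is smooth on all of `ℝ` because `ρ - cos θ` never vanishes.
-/

open MeasureTheory Real intervalIntegral

noncomputable section

def distSq (ρ θ : ℝ) : ℝ := ρ ^ 2 - 2 * ρ * cos θ + 1

def trigIntegral (ρ : ℝ) (n : ℕ) (e : ℝ) : ℝ := ∫ θ in 0..π, sin θ ^ n * distSq ρ θ ^ e

end

theorem integral_sin_pow_add_two (n : ℕ) :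
    ∫ θ in 0..π, sin θ ^ (n + 2) = (n + 1) / (n + 2) * ∫ θ in 0..π, sin θ ^ n := by
  simp [integral_sin_pow]

theorem integral_sin_pow_eq_Gamma (n : ℕ) :
    ∫ θ in 0..π, sin θ ^ n = √π * Gamma ((n + 1) / 2) / Gamma (n / 2 + 1) := by
  have hΓ : Gamma 2⁻¹ = √π := by rw [← one_div, Gamma_one_half_eq]
  induction n using Nat.twoStepInduction with
  | zero => simp [hΓ, mul_self_sqrt pi_pos.le]
  | one =>
    rw [Gamma_add_one (by norm_num)]
    simp [hΓ, field, one_add_one_eq_two]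
  | more n ih _ =>
    have hΓ₁ : Gamma (((n + 2 : ℕ) : ℝ) / 2 + 1) = (n / 2 + 1) * Gamma (n / 2 + 1) := by
      rw [← Gamma_add_one (by positivity)]; push_cast; ring_nf
    have hΓ₂ : Gamma ((((n + 2 : ℕ) : ℝ) + 1) / 2) = (n + 1) / 2 * Gamma ((n + 1) / 2) := by
      rw [← Gamma_add_one (by positivity)]; push_cast; ring_nf
    rw [integral_sin_pow_add_two, ih, hΓ₁, hΓ₂]
    have := (Gamma_pos_of_pos (by positivity : (0 : ℝ) < n / 2 + 1)).ne'
    field_simp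

section

variable {ρ : ℝ}

lemma sub_cos_ne_zero (hρ : 1 < |ρ|) (θ : ℝ) : ρ - cos θ ≠ 0 :=
  sub_ne_zero.2 fun h => by linarith [abs_cos_le_one θ, h ▸ hρ]

lemma distSq_eq_sq_add_sq (ρ θ : ℝ) : distSq ρ θ = (ρ - cos θ) ^ 2 + sin θ ^ 2 := by
  rw [distSq]
  linear_combination -sin_sq_add_cos_sq θ

lemma distSq_pos (hρ : 1 < |ρ|) (θ : ℝ) : 0 < distSq ρ θ := by
  rw [distSq_eq_sq_add_sq]
  have := sub_cos_ne_zero hρ θ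
  positivity

lemma hasDerivAt_distSq (ρ θ : ℝ) : HasDerivAt (distSq ρ) (2 * ρ * sin θ) θ := by
  have := ((hasDerivAt_cos θ).const_mul (2 * ρ)).const_sub (ρ ^ 2) |>.add_const 1
  exact this.congr_deriv (by ring)

lemma hasDerivAt_distSq_rpow (hρ : 1 < |ρ|) (e θ : ℝ) :
    HasDerivAt (fun θ => distSq ρ θ ^ e) (2 * ρ * sin θ * e * distSq ρ θ ^ (e - 1)) θ :=
  (hasDerivAt_distSq ρ θ).rpow_const (.inl (distSq_pos hρ θ).ne')

lemma distSq_rpow_eq_mul (hρ : 1 < |ρ|) (e θ : ℝ) :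
    distSq ρ θ ^ e = distSq ρ θ ^ (e - 1) * distSq ρ θ := by
  rw [← rpow_add_one (distSq_pos hρ θ).ne', sub_add_cancel]

lemma continuous_distSq (ρ : ℝ) : Continuous (distSq ρ) := by
  unfold distSq
  fun_prop

lemma continuous_sin_pow_mul_distSq_rpow (hρ : 1 < |ρ|) (n : ℕ) (e : ℝ) :
    Continuous fun θ => sin θ ^ n * distSq ρ θ ^ e :=
  (continuous_sin.pow n).mul <|
    (continuous_distSq ρ).rpow_const fun θ => .inl (distSq_pos hρ θ).ne'

lemma integral_div_distSq (hρ : 1 < |ρ|) : ∫ θ in 0..π, (ρ ^ 2 - 1) / distSq ρ θ = π := by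
  have hF : ∀ θ ∈ Set.uIcc 0 π, HasDerivAt (fun θ => θ + 2 * arctan (sin θ / (ρ - cos θ)))
      ((ρ ^ 2 - 1) / distSq ρ θ) θ := by
    intro θ _
    have hne := sub_cos_ne_zero hρ θ
    have := (hasDerivAt_id θ).add <| HasDerivAt.const_mul 2 <| HasDerivAt.arctan <|
      (hasDerivAt_sin θ).div ((hasDerivAt_const θ ρ).sub (hasDerivAt_cos θ)) hne
    refine this.congr_deriv ?_
    simp only [Pi.div_apply, Pi.sub_apply, distSq_eq_sq_add_sq]
    field_simp
    linear_combination -sin_sq_add_cos_sq θ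
  rw [integral_eq_sub_of_hasDerivAt hF]
  · simp
  · exact (continuous_const.div (continuous_distSq ρ) fun θ =>
      (distSq_pos hρ θ).ne').intervalIntegrable 0 π

lemma trigIntegral_one (hρ : 1 < |ρ|) (a : ℝ) :
    2 * ρ * a * trigIntegral ρ 1 (a - 1) = ((ρ + 1) ^ 2) ^ a - ((ρ - 1) ^ 2) ^ a := by
  have hF : ∀ θ ∈ Set.uIcc 0 π, HasDerivAt (fun θ => distSq ρ θ ^ a)
      (2 * ρ * a * (sin θ ^ 1 * distSq ρ θ ^ (a - 1))) θ :=
    fun θ _ => (hasDerivAt_distSq_rpow hρ a θ).congr_deriv (by ring)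
  have hint :=
    (continuous_sin_pow_mul_distSq_rpow hρ 1 (a - 1)).intervalIntegrable (μ := volume) 0 π
  rw [trigIntegral, ← intervalIntegral.integral_const_mul,
    integral_eq_sub_of_hasDerivAt hF (hint.const_mul _)]
  simp only [distSq, cos_pi, cos_zero]
  ring_nf

lemma trigIntegral_relation_of_hasDerivAt (hρ : 1 < |ρ|) {f : ℝ → ℝ} {n₁ n₂ n₃ : ℕ}
    {e₁ e₂ e₃ : ℝ} (α β γ : ℝ)
    (hf : ∀ θ, HasDerivAt f (α * (sin θ ^ n₁ * distSq ρ θ ^ e₁) +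
      β * (sin θ ^ n₂ * distSq ρ θ ^ e₂) + γ * (sin θ ^ n₃ * distSq ρ θ ^ e₃)) θ)
    (h₀ : f 0 = 0) (hπ : f π = 0) :
    α * trigIntegral ρ n₁ e₁ + β * trigIntegral ρ n₂ e₂ + γ * trigIntegral ρ n₃ e₃ = 0 := by
  have hint (c : ℝ) (n : ℕ) (e : ℝ) :=
    ((continuous_sin_pow_mul_distSq_rpow hρ n e).intervalIntegrable (μ := volume) 0 π).const_mul c
  have := integral_eq_sub_of_hasDerivAt (fun θ _ => hf θ)
    (((hint α n₁ e₁).add (hint β n₂ e₂)).add (hint γ n₃ e₃))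
  rwa [h₀, hπ, sub_zero, integral_add ((hint α n₁ e₁).add (hint β n₂ e₂)) (hint γ n₃ e₃),
    integral_add (hint α n₁ e₁) (hint β n₂ e₂), intervalIntegral.integral_const_mul,
    intervalIntegral.integral_const_mul, intervalIntegral.integral_const_mul] at this

lemma hasDerivAt_sin_pow_succ (n : ℕ) (θ : ℝ) :
    HasDerivAt (fun θ => sin θ ^ (n + 1)) ((n + 1) * sin θ ^ n * cos θ) θ := by
  simpa using (hasDerivAt_sin θ).fun_pow (n + 1)

lemma trigIntegral_relation_sin_pow (hρ : 1 < |ρ|) (n : ℕ) (e : ℝ) :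
    (n + 1) * (ρ ^ 2 + 1) * trigIntegral ρ n e + -(n + 1) * trigIntegral ρ n (e + 1) +
      4 * ρ ^ 2 * e * trigIntegral ρ (n + 2) (e - 1) = 0 := by
  refine trigIntegral_relation_of_hasDerivAt hρ _ _ _
    (f := fun θ => 2 * ρ * (sin θ ^ (n + 1) * distSq ρ θ ^ e)) (fun θ => ?_) (by simp) (by simp)
  refine (((hasDerivAt_sin_pow_succ n θ).fun_mul (hasDerivAt_distSq_rpow hρ e θ)).const_mul _)
    |>.congr_deriv ?_
  rw [rpow_add_one (distSq_pos hρ θ).ne', distSq_rpow_eq_mul hρ e θ]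
  set w := distSq ρ θ ^ (e - 1)
  rw [distSq]
  ring

lemma trigIntegral_relation_sin_pow_mul_cos (hρ : 1 < |ρ|) (n : ℕ) (e : ℝ) :
    (n + 1) * trigIntegral ρ n e + -(n + 2 + e) * trigIntegral ρ (n + 2) e +
      e * (ρ ^ 2 + 1) * trigIntegral ρ (n + 2) (e - 1) = 0 := by
  refine trigIntegral_relation_of_hasDerivAt hρ _ _ _
    (f := fun θ => sin θ ^ (n + 1) * cos θ * distSq ρ θ ^ e) (fun θ => ?_) (by simp) (by simp)
  refine (((hasDerivAt_sin_pow_succ n θ).fun_mul (hasDerivAt_cos θ)).fun_mul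
    (hasDerivAt_distSq_rpow hρ e θ)) |>.congr_deriv ?_
  rw [distSq_rpow_eq_mul hρ e θ]
  set w := distSq ρ θ ^ (e - 1)
  rw [distSq]
  linear_combination ((n + 1) * sin θ ^ n * w * (ρ ^ 2 - 2 * ρ * cos θ + 1)) *
    sin_sq_add_cos_sq θ

lemma trigIntegral_closed_forms_add_two (hρ : 1 < ρ) (n : ℕ) {s : ℝ}
    (hP : ρ ^ n * (ρ ^ 2 - 1) * trigIntegral ρ n (-n / 2 - 1) = s)
    (hQ : ρ ^ n * trigIntegral ρ n (-n / 2) = s) :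
    ρ ^ (n + 2) * (ρ ^ 2 - 1) * trigIntegral ρ (n + 2) (-n / 2 - 2) = (n + 1) / (n + 2) * s ∧
      ρ ^ (n + 2) * trigIntegral ρ (n + 2) (-n / 2 - 1) = (n + 1) / (n + 2) * s := by
  have hρ' : 1 < |ρ| := hρ.trans_le (le_abs_self ρ)
  have hc : ρ ^ 2 - 1 ≠ 0 := by nlinarith
  have hn : (n : ℝ) + 2 ≠ 0 := by positivity
  have h₁ := trigIntegral_relation_sin_pow hρ' n (-n / 2 - 1)
  have h₂ := trigIntegral_relation_sin_pow_mul_cos hρ' n (-n / 2 - 1)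
  have he : -(n : ℝ) / 2 - 1 - 1 = -n / 2 - 2 := by ring
  rw [show -(n : ℝ) / 2 - 1 + 1 = -n / 2 by ring, he] at h₁
  rw [he] at h₂
  set P₂ := trigIntegral ρ (n + 2) (-n / 2 - 2)
  set Q₂ := trigIntegral ρ (n + 2) (-n / 2 - 1)
  have hP₂ : (n + 2) * (ρ ^ (n + 2) * (ρ ^ 2 - 1) * P₂) = (n + 1) * s := by
    linear_combination (-(ρ ^ n * (ρ ^ 2 - 1) / 2)) * h₁ + ((n + 1) * (ρ ^ 2 + 1) / 2) * hP
      - ((n + 1) * (ρ ^ 2 - 1) / 2) * hQ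
  have hQ₂ : (ρ ^ 2 - 1) * ((n + 2) * (ρ ^ (n + 2) * Q₂)) = (ρ ^ 2 - 1) * ((n + 1) * s) := by
    linear_combination (-2 * ρ ^ (n + 2) * (ρ ^ 2 - 1)) * h₂ + (2 * (n + 1) * ρ ^ 2) * hP
      - (ρ ^ 2 + 1) * hP₂
  constructor
  · rw [div_mul_eq_mul_div, eq_div_iff hn]
    linear_combination hP₂
  · rw [div_mul_eq_mul_div, eq_div_iff hn]
    linear_combination mul_left_cancel₀ hc hQ₂

theorem trigIntegral_closed_forms (hρ : 1 < ρ) (n : ℕ) :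
    ρ ^ n * (ρ ^ 2 - 1) * trigIntegral ρ n (-n / 2 - 1) = ∫ θ in 0..π, sin θ ^ n ∧
      ρ ^ n * trigIntegral ρ n (-n / 2) = ∫ θ in 0..π, sin θ ^ n := by
  have hρ' : 1 < |ρ| := hρ.trans_le (le_abs_self ρ)
  induction n using Nat.twoStepInduction with
  | zero =>
    constructor
    · simpa [trigIntegral, rpow_neg_one, ← intervalIntegral.integral_const_mul, ← div_eq_mul_inv]
        using integral_div_distSq hρ'
    · simp [trigIntegral]
  | one =>
    have h₁ := trigIntegral_one hρ' (-(1 / 2))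
    have h₂ := trigIntegral_one hρ' (1 / 2)
    rw [rpow_neg (sq_nonneg _), rpow_neg (sq_nonneg _)] at h₁
    simp only [← sqrt_eq_rpow, sqrt_sq (by linarith : 0 ≤ ρ + 1),
      sqrt_sq (by linarith : 0 ≤ ρ - 1)] at h₁ h₂
    norm_num [integral_sin] at h₁ h₂ ⊢
    have hp : (ρ + 1) * (ρ + 1)⁻¹ = 1 := mul_inv_cancel₀ (by linarith)
    have hm : (ρ - 1) * (ρ - 1)⁻¹ = 1 := mul_inv_cancel₀ (by linarith)
    exact ⟨by linear_combination (-(ρ ^ 2 - 1)) * h₁ + (ρ + 1) * hm - (ρ - 1) * hp,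
      by linear_combination h₂⟩
  | more n ih _ =>
    rw [integral_sin_pow_add_two]
    push_cast
    rw [show -((n : ℝ) + 2) / 2 - 1 = -n / 2 - 2 by ring,
      show -((n : ℝ) + 2) / 2 = -n / 2 - 1 by ring]
    exact trigIntegral_closed_forms_add_two hρ n ih.1 ih.2

theorem trigIntegral_eq_Gamma (hρ : 1 < ρ) (n : ℕ) :
    trigIntegral ρ n (-n / 2 - 1)
      = (ρ ^ n)⁻¹ / (ρ ^ 2 - 1) * √π * Gamma ((n + 1) / 2) / Gamma (n / 2 + 1) := by
  have hc : ρ ^ 2 - 1 ≠ 0 := by nlinarith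
  have hρn : ρ ^ n ≠ 0 := pow_ne_zero n (by positivity)
  have h : trigIntegral ρ n (-n / 2 - 1) = (ρ ^ n)⁻¹ / (ρ ^ 2 - 1) * ∫ θ in 0..π, sin θ ^ n := by
    rw [← (trigIntegral_closed_forms hρ n).1]
    field_simp
  rw [h, integral_sin_pow_eq_Gamma]
  ring

end

/-- **Trigonometric integral** (key step in the proof of Riesz's formula). For every integer
`d ≥ 2` and real `ρ > 1`,
`∫₀^π sin^{d-2}θ (ρ² - 2ρcosθ + 1)^{-d/2} dθ = (ρ^{2-d}/(ρ²-1)) √π Γ((d-1)/2)/Γ(d/2)`. -/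
theorem trigonometric_integral_identity
    (d : ℕ) (hd : 2 ≤ d) (ρ : ℝ) (hρ : 1 < ρ) :
    ∫ θ in Set.Ioo (0 : ℝ) Real.pi,
        Real.sin θ ^ (d - 2) * (ρ ^ 2 - 2 * ρ * Real.cos θ + 1) ^ (-((d : ℝ) / 2))
      = ρ ^ (2 - (d : ℝ)) / (ρ ^ 2 - 1)
          * Real.sqrt Real.pi * Real.Gamma (((d : ℝ) - 1) / 2) / Real.Gamma ((d : ℝ) / 2) := by
  obtain ⟨n, rfl⟩ : ∃ n, d = n + 2 := ⟨d - 2, by omega⟩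
  have hpow : ρ ^ (2 - ((n + 2 : ℕ) : ℝ)) = (ρ ^ n)⁻¹ := by
    rw [← rpow_natCast, ← rpow_neg (by positivity)]
    push_cast
    ring_nf
  rw [Nat.add_sub_cancel, show -((n + 2 : ℕ) / 2 : ℝ) = -n / 2 - 1 by push_cast; ring, hpow,
    show (((n + 2 : ℕ) : ℝ) - 1) / 2 = (n + 1) / 2 by push_cast; ring,
    show ((n + 2 : ℕ) : ℝ) / 2 = n / 2 + 1 by push_cast; ring, ← trigIntegral_eq_Gamma hρ n,
    trigIntegral, intervalIntegral.integral_of_le pi_pos.le, integral_Ioc_eq_integral_Ioo]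
  rfl
end
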